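/- arXiv:2312.10506 — 2 statements merged into one kernel-verified Lean document; each statement's English description precedes it below -/
import Mathlib

section
/- Let A be a Hurwitz d×d real matrix and x₀ ∈ ℝ^d, x₀ ≠ 0. The set of cut tail points of the trajectory x(t) = e^{tA}x₀ is exactly the open half-line (T_cut(x₀), +∞): a number T > 0 is a cut tail point if and only if T > T_cut(x₀). -/
open Matrix Set Filter Topology

noncomputable section

/-- A real square matrix is *Hurwitz* if all its (complex) eigenvalues,
i.e. the roots of its characteristic polynomial over `ℂ`, have negative real part. -/
def IsHurwitz {d : ℕ} (A : Matrix (Fin d) (Fin d) ℝ) : Prop :=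
  ∀ μ : ℂ, (A.map (algebraMap ℝ ℂ)).charpoly.IsRoot μ → μ.re < 0

/-- The trajectory `x(t) = e^{tA} x₀` of the linear system `ẋ = Ax`. -/
def traj {d : ℕ} (A : Matrix (Fin d) (Fin d) ℝ) (x₀ : Fin d → ℝ) (t : ℝ) : Fin d → ℝ :=
  (NormedSpace.exp (t • A)).mulVec x₀

/-- Symmetrized convex hull `co_s X = co (X ∪ (−X))`. -/
def symCo {d : ℕ} (X : Set (Fin d → ℝ)) : Set (Fin d → ℝ) :=
  convexHull ℝ (X ∪ (-X))

/-- `G = co_s {x(t) : t ≥ 0}`, the symmetrized convex hull of the whole trajectory. -/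
def trajHull {d : ℕ} (A : Matrix (Fin d) (Fin d) ℝ) (x₀ : Fin d → ℝ) : Set (Fin d → ℝ) :=
  symCo (traj A x₀ '' Ici (0:ℝ))

/-- `T > 0` is a *cut tail point* of the trajectory starting at `x₀` if `x(t)` lies in the
relative (intrinsic) interior of `G` for every `t ≥ T`. -/
def IsCutTailPoint {d : ℕ} (A : Matrix (Fin d) (Fin d) ℝ) (x₀ : Fin d → ℝ) (T : ℝ) : Prop :=
  0 < T ∧ ∀ t, T ≤ t → traj A x₀ t ∈ intrinsicInterior ℝ (trajHull A x₀)

/-- `T_cut(x₀)`: the infimum of all cut tail points of the trajectory starting at `x₀`. -/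
def Tcut {d : ℕ} (A : Matrix (Fin d) (Fin d) ℝ) (x₀ : Fin d → ℝ) : ℝ :=
  sInf {T | IsCutTailPoint A x₀ T}

/-- `L_{x₀}`: the minimal `A`-invariant linear subspace of `ℝ^d` containing `x₀`. -/
def minInv {d : ℕ} (A : Matrix (Fin d) (Fin d) ℝ) (x₀ : Fin d → ℝ) : Submodule ℝ (Fin d → ℝ) :=
  sInf {L | x₀ ∈ L ∧ ∀ v ∈ L, A.mulVec v ∈ L}

/-- A point `x₀` is *generic* if `dim L_{x₀}` equals the degree of the minimal polynomial of `A`. -/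
def IsGeneric {d : ℕ} (A : Matrix (Fin d) (Fin d) ℝ) (x₀ : Fin d → ℝ) : Prop :=
  Module.finrank ℝ (minInv A x₀) = (minpoly ℝ A).natDegree

/-!
Since `A` is Hurwitz, `x(t) → 0`. The set `G` is convex, symmetric and nonempty, so `0` lies in
its relative interior, which is relatively open in the affine span of `G`; hence `x(t)` eventually
stays in `ri G` and cut tail points exist. If `T` is a cut tail point then `x(T) ∈ ri G`, and by
continuity of the trajectory every `T' < T` close enough to `T` is a cut tail point as well. So the
set of cut tail points is an upward closed subset of `(0, ∞)` that does not contain its infimum.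
-/

open NormedSpace
open scoped Nat

section IntrinsicInterior

variable {𝕜 V P : Type*} [Ring 𝕜] [AddCommGroup V] [Module 𝕜 V] [TopologicalSpace P]
  [AddTorsor V P] {s : Set P} {x : P}

theorem mem_intrinsicInterior_iff_mem_nhdsWithin :
    x ∈ intrinsicInterior 𝕜 s ↔ x ∈ affineSpan 𝕜 s ∧ s ∈ 𝓝[affineSpan 𝕜 s] x := by
  constructor
  · rintro ⟨y, hy, rfl⟩
    rw [mem_interior_iff_mem_nhds, mem_nhds_subtype_iff_nhdsWithin] at hy
    exact ⟨y.2, mem_of_superset hy (image_preimage_subset _ _)⟩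
  · rintro ⟨hx, hs⟩
    refine ⟨⟨x, hx⟩, ?_, rfl⟩
    rw [mem_interior_iff_mem_nhds, mem_nhds_subtype_iff_nhdsWithin]
    filter_upwards [self_mem_nhdsWithin, hs] with z hzA hzs using ⟨⟨z, hzA⟩, hzs, rfl⟩

theorem intrinsicInterior_mem_nhdsWithin (hx : x ∈ intrinsicInterior 𝕜 s) :
    intrinsicInterior 𝕜 s ∈ 𝓝[affineSpan 𝕜 s] x := by
  have hs := (mem_intrinsicInterior_iff_mem_nhdsWithin.1 hx).2
  filter_upwards [eventually_eventually_nhdsWithin.2 hs, self_mem_nhdsWithin] with y hy hyA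
  exact mem_intrinsicInterior_iff_mem_nhdsWithin.2 ⟨hyA, hy⟩

theorem Filter.Tendsto.eventually_mem_intrinsicInterior {α : Type*} {l : Filter α} {f : α → P}
    (hf : Tendsto f l (𝓝 x)) (hfs : ∀ᶠ a in l, f a ∈ affineSpan 𝕜 s)
    (hx : x ∈ intrinsicInterior 𝕜 s) : ∀ᶠ a in l, f a ∈ intrinsicInterior 𝕜 s :=
  tendsto_nhdsWithin_iff.2 ⟨hf, hfs⟩ (intrinsicInterior_mem_nhdsWithin hx)

end IntrinsicInterior

theorem zero_mem_intrinsicInterior_of_neg_mem {E : Type*} [NormedAddCommGroup E]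
    [NormedSpace ℝ E] [FiniteDimensional ℝ E] {s : Set E} (hconv : Convex ℝ s)
    (hsym : ∀ y ∈ s, -y ∈ s) (hne : s.Nonempty) : (0 : E) ∈ intrinsicInterior ℝ s := by
  have half_add_half (a b : E) (ha : a ∈ s) (hb : b ∈ s) :
      (1 / 2 : ℝ) • a + (1 / 2 : ℝ) • b ∈ s :=
    hconv ha hb (by norm_num) (by norm_num) (by norm_num)
  obtain ⟨y, hy⟩ := hne.intrinsicInterior hconv
  set A := affineSpan ℝ s
  have hys : y ∈ s := intrinsicInterior_subset hy
  have h0 : (0 : E) ∈ s := by simpa using half_add_half y (-y) hys (hsym y hys)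
  have hyA : y ∈ A := subset_affineSpan ℝ s hys
  have h0A : (0 : E) ∈ A := subset_affineSpan ℝ s h0
  have htendsto (c : ℝ) : Tendsto (fun z => c • z + y) (𝓝[A] 0) (𝓝[A] y) := by
    refine tendsto_nhdsWithin_iff.2 ⟨?_, ?_⟩
    · exact (Continuous.tendsto' (by fun_prop) 0 y (by simp)).mono_left nhdsWithin_le_nhds
    · filter_upwards [self_mem_nhdsWithin] with z hz
      simpa using AffineSubspace.smul_vsub_vadd_mem A c hz h0A hyA
  have hs := (mem_intrinsicInterior_iff_mem_nhdsWithin.1 hy).2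
  refine mem_intrinsicInterior_iff_mem_nhdsWithin.2 ⟨h0A, ?_⟩
  -- `z` is the midpoint of `y + z` and `-(y - z)`, both in `s` for `z ∈ A` near `0`.
  filter_upwards [htendsto 1 hs, htendsto (-1) hs] with z hplus hminus
  convert half_add_half _ _ hplus (hsym _ hminus) using 1
  module

section MatrixExp

variable {m : Type*} [Fintype m] [DecidableEq m]

section RCLike

attribute [local instance] Matrix.linftyOpNormedAddCommGroup Matrix.linftyOpNormedRing
  Matrix.linftyOpNormedAlgebra

variable {𝕂 : Type*} [RCLike 𝕂]

theorem Matrix.exp_mulVec_eq_sum_of_pow_mulVec_eq_zero {N : Matrix m m 𝕂} {v : m → 𝕂} {k : ℕ}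
    (hk : N ^ k *ᵥ v = 0) : exp N *ᵥ v = ∑ n ∈ Finset.range k, (n !⁻¹ : 𝕂) • (N ^ n *ᵥ v) := by
  have hvanish : ∀ n ∉ Finset.range k, (n !⁻¹ : 𝕂) • (N ^ n *ᵥ v) = 0 := fun n hn => by
    rw [← Nat.sub_add_cancel (not_lt.1 (Finset.mem_range.not.1 hn)), pow_add, ← mulVec_mulVec,
      hk, mulVec_zero, smul_zero]
  refine ((exp_series_hasSum_exp' (𝕂 := 𝕂) N).map (mulVec.addMonoidHomLeft v)
    (continuous_id.matrix_mulVec continuous_const)).unique ?_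
  convert hasSum_sum_of_ne_finset_zero (L := .unconditional ℕ) hvanish using 2 with n
  exact smul_mulVec _ _ _

theorem Matrix.map_exp {𝕂' : Type*} [RCLike 𝕂'] (f : 𝕂 →+* 𝕂') (hf : Continuous f)
    (M : Matrix m m 𝕂) : (exp M).map f = exp (M.map f) :=
  NormedSpace.map_exp f.mapMatrix (continuous_id.matrix_map hf) M

theorem Matrix.continuous_exp_smul_mulVec (M : Matrix m m 𝕂) (v : m → 𝕂) :
    Continuous fun t : 𝕂 => exp (t • M) *ᵥ v :=
  (exp_continuous.comp (continuous_id.smul continuous_const)).matrix_mulVec continuous_const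

theorem Matrix.exp_smul_mulVec_eq_sum (B : Matrix m m 𝕂) (μ t : 𝕂) {v : m → 𝕂} {k : ℕ}
    (hk : (B - μ • 1) ^ k *ᵥ v = 0) :
    exp (t • B) *ᵥ v =
      ∑ n ∈ Finset.range k, (exp (t * μ) * t ^ n * (n !⁻¹ : 𝕂)) • ((B - μ • 1) ^ n *ᵥ v) := by
  set N := B - μ • 1
  have hsplit : t • B = algebraMap 𝕂 _ (t * μ) + t • N := by
    rw [Algebra.algebraMap_eq_smul_one, smul_sub, ← smul_assoc, smul_eq_mul, add_sub_cancel]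
  have htN : (t • N) ^ k *ᵥ v = 0 := by rw [smul_pow, smul_mulVec, hk, smul_zero]
  have hscalar : exp (algebraMap 𝕂 (Matrix m m 𝕂) (t * μ)) = algebraMap 𝕂 _ (exp (t * μ)) :=
    (algebraMap_exp_comm _).symm
  rw [hsplit, Matrix.exp_add_of_commute _ _ (Algebra.commute_algebraMap_left _ _), hscalar,
    Algebra.algebraMap_eq_smul_one, smul_mul_assoc, one_mul, smul_mulVec,
    exp_mulVec_eq_sum_of_pow_mulVec_eq_zero htN, Finset.smul_sum]
  refine Finset.sum_congr rfl fun n _ => ?_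
  rw [smul_pow, smul_mulVec, smul_smul, smul_smul]
  ring_nf

end RCLike

theorem tendsto_exp_mul_mul_pow_atTop_nhds_zero {μ : ℂ} (hμ : μ.re < 0) (n : ℕ) :
    Tendsto (fun t : ℝ => exp ((t : ℂ) * μ) * (t : ℂ) ^ n) atTop (𝓝 0) := by
  rw [tendsto_zero_iff_norm_tendsto_zero]
  refine (tendsto_rpow_mul_exp_neg_mul_atTop_nhds_zero n (-μ.re) (neg_pos.2 hμ)).congr' ?_
  filter_upwards [eventually_ge_atTop 0] with t ht
  rw [← Complex.exp_eq_exp_ℂ, norm_mul, Complex.norm_exp, norm_pow, Complex.norm_real,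
    Real.norm_of_nonneg ht, Real.rpow_natCast]
  simp only [Complex.re_ofReal_mul]
  ring_nf

theorem Matrix.tendsto_exp_smul_mulVec_of_pow_mulVec_eq_zero {B : Matrix m m ℂ} {μ : ℂ}
    (hμ : μ.re < 0) {v : m → ℂ} {k : ℕ} (hk : (B - μ • 1) ^ k *ᵥ v = 0) :
    Tendsto (fun t : ℝ => exp (t • B) *ᵥ v) atTop (𝓝 0) := by
  simp_rw [← Complex.coe_smul, exp_smul_mulVec_eq_sum B μ _ hk]
  rw [← Finset.sum_const_zero (s := Finset.range k)]
  refine tendsto_finsetSum _ fun n _ => ?_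
  simpa using ((tendsto_exp_mul_mul_pow_atTop_nhds_zero hμ n).mul_const (n !⁻¹ : ℂ)).smul_const
    ((B - μ • 1) ^ n *ᵥ v)

theorem Matrix.tendsto_exp_smul_mulVec_of_mem_maxGenEigenspace
    {B : Matrix m m ℂ} (hB : ∀ μ : ℂ, B.charpoly.IsRoot μ → μ.re < 0) {μ : ℂ} {v : m → ℂ}
    (hv : v ∈ Module.End.maxGenEigenspace (toLin' B) μ) :
    Tendsto (fun t : ℝ => exp (t • B) *ᵥ v) atTop (𝓝 0) := by
  obtain ⟨k, hk⟩ := (Module.End.mem_maxGenEigenspace _ _ _).1 hv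
  by_cases hv0 : v = 0
  · simp [hv0]
  have hμ : Module.End.HasEigenvalue (toLin' B) μ :=
    Module.End.HasUnifEigenvalue.lt zero_lt_one (k := ⊤) ((Submodule.ne_bot_iff _).2 ⟨v, hv, hv0⟩)
  refine tendsto_exp_smul_mulVec_of_pow_mulVec_eq_zero (hB μ ?_) (k := k) ?_
  · rwa [← charpoly_toLin', ← Module.End.hasEigenvalue_iff_isRoot_charpoly]
  · rwa [← toLin'_apply, toLin'_pow, map_sub, map_smul, toLin'_one, ← Module.End.one_eq_id]

theorem Matrix.tendsto_exp_smul_mulVec_atTop_nhds_zero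
    {B : Matrix m m ℂ} (hB : ∀ μ : ℂ, B.charpoly.IsRoot μ → μ.re < 0) (v : m → ℂ) :
    Tendsto (fun t : ℝ => exp (t • B) *ᵥ v) atTop (𝓝 0) := by
  have hv : v ∈ ⨆ μ, Module.End.maxGenEigenspace (toLin' B) μ := by
    rw [Module.End.iSup_maxGenEigenspace_eq_top]; trivial
  refine Submodule.iSup_induction _ (motive := fun v => Tendsto (fun t : ℝ => exp (t • B) *ᵥ v)
    atTop (𝓝 0)) hv (fun _ _ => tendsto_exp_smul_mulVec_of_mem_maxGenEigenspace hB) (by simp) ?_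
  exact fun v w hv hw => by simpa [mulVec_add] using hv.add hw

end MatrixExp

section Trajectory

variable {d : ℕ} (A : Matrix (Fin d) (Fin d) ℝ) (x₀ : Fin d → ℝ)

theorem continuous_traj : Continuous (traj A x₀) :=
  continuous_exp_smul_mulVec A x₀

theorem tendsto_traj_atTop_nhds_zero (hA : IsHurwitz A) : Tendsto (traj A x₀) atTop (𝓝 0) := by
  have hcomplex (t : ℝ) (i : Fin d) :
      (exp (t • A.map (algebraMap ℝ ℂ)) *ᵥ fun i => (x₀ i : ℂ)) i = (traj A x₀ t i : ℂ) := by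
    rw [show t • A.map (algebraMap ℝ ℂ) = (t • A).map (algebraMap ℝ ℂ) by ext; simp,
      ← Matrix.map_exp _ Complex.continuous_ofReal]
    exact (RingHom.map_mulVec (algebraMap ℝ ℂ) _ x₀ i).symm
  have hre : Continuous fun z : Fin d → ℂ => fun i => (z i).re := by fun_prop
  refine ((hre.tendsto' 0 0 (by ext; simp)).comp
    (tendsto_exp_smul_mulVec_atTop_nhds_zero hA fun i => (x₀ i : ℂ))).congr fun t => ?_
  ext i
  rw [Function.comp_apply, hcomplex, Complex.ofReal_re]

theorem neg_symCo (X : Set (Fin d → ℝ)) : -symCo X = symCo X := by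
  rw [symCo, ← convexHull_neg, Set.union_neg, neg_neg, union_comm]

theorem convex_trajHull : Convex ℝ (trajHull A x₀) :=
  convex_convexHull ℝ _

theorem traj_mem_trajHull {t : ℝ} (ht : 0 ≤ t) : traj A x₀ t ∈ trajHull A x₀ :=
  subset_convexHull ℝ _ (Or.inl ⟨t, ht, rfl⟩)

theorem neg_mem_trajHull {y : Fin d → ℝ} (hy : y ∈ trajHull A x₀) : -y ∈ trajHull A x₀ := by
  rw [trajHull, ← neg_symCo]
  exact Set.neg_mem_neg.2 hy

theorem zero_mem_intrinsicInterior_trajHull : 0 ∈ intrinsicInterior ℝ (trajHull A x₀) :=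
  zero_mem_intrinsicInterior_of_neg_mem (convex_trajHull A x₀) (fun _ => neg_mem_trajHull A x₀)
    ⟨_, traj_mem_trajHull A x₀ le_rfl⟩

theorem eventually_traj_mem_intrinsicInterior {l : Filter ℝ} {y : Fin d → ℝ}
    (hl : ∀ᶠ t in l, 0 ≤ t) (hf : Tendsto (traj A x₀) l (𝓝 y))
    (hy : y ∈ intrinsicInterior ℝ (trajHull A x₀)) :
    ∀ᶠ t in l, traj A x₀ t ∈ intrinsicInterior ℝ (trajHull A x₀) :=
  hf.eventually_mem_intrinsicInterior
    (hl.mono fun _ ht => subset_affineSpan ℝ _ (traj_mem_trajHull A x₀ ht)) hy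

variable {A x₀}

theorem IsCutTailPoint.mono {T T' : ℝ} (hT : IsCutTailPoint A x₀ T) (hTT' : T ≤ T') :
    IsCutTailPoint A x₀ T' :=
  ⟨hT.1.trans_le hTT', fun t ht => hT.2 t (hTT'.trans ht)⟩

theorem exists_isCutTailPoint (hA : IsHurwitz A) : ∃ T, IsCutTailPoint A x₀ T := by
  obtain ⟨T, hT⟩ := eventually_atTop.1 <| eventually_traj_mem_intrinsicInterior A x₀
    (eventually_ge_atTop 0) (tendsto_traj_atTop_nhds_zero A x₀ hA)
    (zero_mem_intrinsicInterior_trajHull A x₀)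
  exact ⟨max T 1, by positivity, fun t ht => hT t ((le_max_left _ _).trans ht)⟩

theorem IsCutTailPoint.exists_lt {T : ℝ} (hT : IsCutTailPoint A x₀ T) :
    ∃ T' < T, IsCutTailPoint A x₀ T' := by
  have hev := eventually_traj_mem_intrinsicInterior A x₀
    ((eventually_gt_nhds hT.1).mono fun _ => le_of_lt) ((continuous_traj A x₀).tendsto T)
    (hT.2 T le_rfl)
  obtain ⟨a, b, ⟨haT, hTb⟩, hsub⟩ :=
    mem_nhds_iff_exists_Ioo_subset.1 (hev.and (eventually_gt_nhds hT.1))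
  refine ⟨(a + T) / 2, by linarith, (hsub ⟨by linarith, by linarith⟩).2, fun t ht => ?_⟩
  rcases lt_or_ge t T with htT | hTt
  · exact (hsub ⟨by linarith, by linarith⟩).1
  · exact hT.2 t hTt

end Trajectory

theorem isCutTailPoint_iff_lt_general {d : ℕ} (A : Matrix (Fin d) (Fin d) ℝ) (hA : IsHurwitz A)
    (x₀ : Fin d → ℝ) :
    ∀ T : ℝ, 0 < T → (IsCutTailPoint A x₀ T ↔ Tcut A x₀ < T) := by
  intro T _
  have hbdd : BddBelow {T | IsCutTailPoint A x₀ T} := ⟨0, fun _ hS => hS.1.le⟩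
  constructor
  · intro hT
    obtain ⟨T', hT'T, hT'⟩ := hT.exists_lt
    exact (csInf_le hbdd hT').trans_lt hT'T
  · intro hlt
    obtain ⟨T₀, hT₀, hT₀T⟩ := exists_lt_of_csInf_lt (exists_isCutTailPoint hA) hlt
    exact IsCutTailPoint.mono hT₀ hT₀T.le

/-- The set of cut tail points of a trajectory is exactly the open half-line `(T_cut(x₀), +∞)`. -/
theorem isCutTailPoint_iff_lt {d : ℕ} (A : Matrix (Fin d) (Fin d) ℝ) (hA : IsHurwitz A)
    (x₀ : Fin d → ℝ) (hx₀ : x₀ ≠ 0) :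
    ∀ T : ℝ, 0 < T → (IsCutTailPoint A x₀ T ↔ Tcut A x₀ < T) :=
  isCutTailPoint_iff_lt_general A hA x₀
end
end

section
/- Let A and B be Hurwitz real matrices (possibly of different sizes) having the same minimal polynomial. Then T_cut(A) = T_cut(B), i.e., the critical value T_cut of a Hurwitz matrix depends only on its minimal polynomial. -/
open Matrix Set Filter Topology

noncomputable section

/-! For generic `x` the Krylov map `q ↦ q(A) x` on `ℝ[X]` is onto `L_x`, which has dimension
`deg (minpoly A)`, so its kernel is exactly the multiples of the minimal polynomial. Hence, for
generic `x`, `y` and `minpoly A = minpoly B`, the assignments `q(A) x ↦ q(B) y` and back are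
well-defined linear maps, inverse to each other on `L_x`. By the exponential series they carry
the trajectory of `x` to that of `y`, so they map `G_x` onto `G_y` bijectively on its affine
span, preserving relative interiors; thus both trajectories have the same cut tail points. -/

open Polynomial
open scoped Nat

theorem intrinsicInterior_image_of_leftInvOn {𝕜 E F : Type*} [Ring 𝕜]
    [AddCommGroup E] [Module 𝕜 E] [TopologicalSpace E] [IsTopologicalAddGroup E]
    [AddCommGroup F] [Module 𝕜 F] [TopologicalSpace F] [IsTopologicalAddGroup F]
    (f : E →L[𝕜] F) (g : F →L[𝕜] E) {s : Set E} (hgf : LeftInvOn g f s) :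
    intrinsicInterior 𝕜 (f '' s) = f '' intrinsicInterior 𝕜 s := by
  -- the shear `(v, w) ↦ (v - g (w + f v), w + f v)` of `E × F` maps `s × {0}` onto `{0} × f '' s`
  let τ : (E × F) ≃L[𝕜] E × F :=
    (ContinuousLinearEquiv.refl 𝕜 E).skewProd (.refl 𝕜 F) f |>.trans <|
      (ContinuousLinearEquiv.prodComm 𝕜 E F).trans <|
        ((ContinuousLinearEquiv.refl 𝕜 F).skewProd (.refl 𝕜 E) (-g)).trans
          (ContinuousLinearEquiv.prodComm 𝕜 F E)
  have hτ : ∀ t ⊆ s, τ '' (t ×ˢ {0}) = {0} ×ˢ (f '' t) := by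
    intro t ht
    ext ⟨a, b⟩
    simp only [τ, mem_image, mem_prod, mem_singleton_iff, Prod.exists, Prod.mk.injEq,
      ContinuousLinearEquiv.trans_apply, ContinuousLinearEquiv.skewProd_apply,
      ContinuousLinearEquiv.prodComm_apply, ContinuousLinearEquiv.refl_apply, Prod.swap_prod_mk]
    constructor
    · rintro ⟨v, _, ⟨hv, rfl⟩, rfl, rfl⟩
      simpa [hgf (ht hv)] using ⟨v, hv, rfl⟩
    · rintro ⟨rfl, v, hv, rfl⟩
      exact ⟨v, 0, ⟨hv, rfl⟩, by simp [hgf (ht hv)], zero_add _⟩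
  have key := τ.toContinuousAffineEquiv.intrinsicInterior_image (s ×ˢ {0})
  rw [ContinuousLinearEquiv.coe_toContinuousAffineEquiv, hτ s subset_rfl,
    intrinsicInterior_prod_eq, intrinsicInterior_prod_eq, intrinsicInterior_singleton,
    intrinsicInterior_singleton, hτ _ intrinsicInterior_subset, singleton_prod,
    singleton_prod] at key
  exact image_injective.2 (Prod.mk_right_injective 0) key

theorem LinearMap.exists_comp_eq_of_ker_le {K M V W : Type*} [Field K] [AddCommGroup M]
    [Module K M] [AddCommGroup V] [Module K V] [AddCommGroup W] [Module K W]
    (f : M →ₗ[K] V) (g : M →ₗ[K] W) (h : ker f ≤ ker g) : ∃ Φ : V →ₗ[K] W, Φ ∘ₗ f = g := by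
  obtain ⟨ψ, hψ⟩ := ((ker f).liftQ f le_rfl).exists_leftInverse_of_injective
    (Submodule.ker_liftQ_eq_bot _ _ _ le_rfl)
  refine ⟨(ker f).liftQ g h ∘ₗ ψ, LinearMap.ext fun m => ?_⟩
  have hm : ψ (f m) = (ker f).mkQ m := LinearMap.congr_fun hψ ((ker f).mkQ m)
  simp [hm]

section KrylovMap

variable {R n : Type*} [CommRing R] [Fintype n] [DecidableEq n]

def krylovMap (A : Matrix n n R) (x : n → R) : R[X] →ₗ[R] n → R where
  toFun q := aeval A q *ᵥ x
  map_add' p q := by simp [Matrix.add_mulVec]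
  map_smul' c q := by simp [Matrix.smul_mulVec]

@[simp] theorem krylovMap_apply (A : Matrix n n R) (x : n → R) (q : R[X]) :
    krylovMap A x q = aeval A q *ᵥ x := rfl

end KrylovMap

section MinInv

variable {d : ℕ}

theorem range_krylovMap (A : Matrix (Fin d) (Fin d) ℝ) (x : Fin d → ℝ) :
    LinearMap.range (krylovMap A x) = minInv A x := by
  apply le_antisymm
  · refine le_sInf fun L ⟨hxL, hAL⟩ => ?_
    have hpow : ∀ k : ℕ, (A ^ k) *ᵥ x ∈ L := by
      intro k
      induction k with
      | zero => simpa using hxL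
      | succ k ih => simpa [pow_succ', ← Matrix.mulVec_mulVec] using hAL _ ih
    rintro _ ⟨q, rfl⟩
    induction q using Polynomial.induction_on' with
    | add p q hp hq => rw [map_add]; exact L.add_mem hp hq
    | monomial k c =>
      rw [← C_mul_X_pow_eq_monomial, ← smul_eq_C_mul, map_smul]
      simpa using L.smul_mem c (hpow k)
  · refine sInf_le ⟨⟨1, by simp⟩, ?_⟩
    rintro _ ⟨q, rfl⟩
    exact ⟨X * q, by simp [Matrix.mulVec_mulVec]⟩

theorem ker_krylovMap_of_isGeneric {A : Matrix (Fin d) (Fin d) ℝ} {x : Fin d → ℝ}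
    (hx : IsGeneric A x) :
    LinearMap.ker (krylovMap A x) = LinearMap.ker (modByMonicHom (minpoly ℝ A)) := by
  set p := minpoly ℝ A
  have hp : p.Monic := minpoly.monic (Matrix.isIntegral A)
  have hpA : aeval A p = 0 := minpoly.aeval ℝ A
  let rem : ℝ[X] →ₗ[ℝ] degreeLT ℝ p.natDegree :=
    (modByMonicHom p).codRestrict _ fun q => mem_degreeLT.2 <| by
      simpa [degree_eq_natDegree hp.ne_zero] using degree_modByMonic_lt q hp
  let r := krylovMap A x ∘ₗ (degreeLT ℝ p.natDegree).subtype
  have hfac : krylovMap A x = r ∘ₗ rem := by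
    refine LinearMap.ext fun q => ?_
    simp [r, rem, aeval_modByMonic_eq_self_of_root hpA]
  have hrange : LinearMap.range r = minInv A x :=
    (le_antisymm (LinearMap.range_comp_le_range (degreeLT ℝ p.natDegree).subtype _)
      fun _ ⟨q, hq⟩ => ⟨rem q, (LinearMap.congr_fun hfac q).symm.trans hq⟩).trans
      (range_krylovMap A x)
  -- `r` maps the `deg p`-dimensional space of remainders onto `L_x`, of the same dimension
  have hr : LinearMap.ker r = ⊥ := by
    have := LinearMap.finrank_range_add_finrank_ker r
    have hdim : Module.finrank ℝ (minInv A x) = p.natDegree := hx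
    rw [hrange, hdim, (degreeLTEquiv ℝ p.natDegree).finrank_eq, Module.finrank_fin_fun] at this
    exact Submodule.finrank_eq_zero.1 (by omega)
  rw [hfac, LinearMap.ker_comp_of_ker_eq_bot _ hr, LinearMap.ker_codRestrict]

end MinInv

section Trajectory

attribute [local instance] Matrix.linftyOpNormedRing Matrix.linftyOpNormedAlgebra

variable {d e : ℕ}

theorem hasSum_traj (A : Matrix (Fin d) (Fin d) ℝ) (x : Fin d → ℝ) (t : ℝ) :
    HasSum (fun k : ℕ => (t ^ k / k !) • krylovMap A x (X ^ k)) (traj A x t) := by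
  have := (NormedSpace.exp_series_hasSum_exp' (𝕂 := ℝ) (t • A)).map
    (Matrix.mulVec.addMonoidHomLeft x) (continuous_id.matrix_mulVec continuous_const)
  convert this using 1
  · ext k : 1
    simp [Matrix.mulVec.addMonoidHomLeft, _root_.smul_pow, Matrix.smul_mulVec, smul_smul,
      div_eq_inv_mul]
  · rfl

theorem map_traj_of_comp_krylovMap {A : Matrix (Fin d) (Fin d) ℝ}
    {B : Matrix (Fin e) (Fin e) ℝ} {x : Fin d → ℝ} {y : Fin e → ℝ}
    (Φ : (Fin d → ℝ) →ₗ[ℝ] Fin e → ℝ) (hΦ : Φ ∘ₗ krylovMap A x = krylovMap B y) (t : ℝ) :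
    Φ (traj A x t) = traj B y t := by
  refine ((hasSum_traj A x t).map Φ Φ.continuous_of_finiteDimensional).unique ?_
  convert hasSum_traj B y t using 1
  ext k : 1
  simp [← hΦ]

end Trajectory

theorem image_symCo {d e : ℕ} (Φ : (Fin d → ℝ) →ₗ[ℝ] Fin e → ℝ) (X : Set (Fin d → ℝ)) :
    Φ '' symCo X = symCo (Φ '' X) := by
  rw [symCo, symCo, Φ.image_convexHull, image_union, image_neg]

theorem IsCutTailPoint.of_comp_krylovMap {d e : ℕ} {A : Matrix (Fin d) (Fin d) ℝ}
    {B : Matrix (Fin e) (Fin e) ℝ} {x : Fin d → ℝ} {y : Fin e → ℝ} {T : ℝ}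
    (Φ : (Fin d → ℝ) →ₗ[ℝ] Fin e → ℝ) (Ψ : (Fin e → ℝ) →ₗ[ℝ] Fin d → ℝ)
    (hΦ : Φ ∘ₗ krylovMap A x = krylovMap B y) (hΨ : Ψ ∘ₗ krylovMap B y = krylovMap A x)
    (hT : IsCutTailPoint A x T) : IsCutTailPoint B y T := by
  have hΦtraj := map_traj_of_comp_krylovMap Φ hΦ
  have hhull : Φ '' trajHull A x = trajHull B y := by
    simp only [trajHull, image_symCo, image_image, hΦtraj]
  have hfix : LeftInvOn Ψ Φ (trajHull A x) := by
    have hΨΦ : ∀ t, Ψ (Φ (traj A x t)) = traj A x t := fun t => by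
      rw [hΦtraj, map_traj_of_comp_krylovMap Ψ hΨ]
    have hsub : trajHull A x ⊆ LinearMap.eqLocus (Ψ ∘ₗ Φ) LinearMap.id := by
      refine convexHull_min ?_ (LinearMap.eqLocus (Ψ ∘ₗ Φ) LinearMap.id).convex
      rintro z (⟨t, -, rfl⟩ | ⟨t, -, ht⟩)
      · exact hΨΦ t
      · obtain rfl : z = -traj A x t := by rw [ht, neg_neg]
        simp [hΨΦ t]
    exact hsub
  have hinterior := intrinsicInterior_image_of_leftInvOn Φ.toContinuousLinearMap
    Ψ.toContinuousLinearMap hfix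
  rw [LinearMap.coe_toContinuousLinearMap', hhull] at hinterior
  refine ⟨hT.1, fun t ht => ?_⟩
  rw [← hΦtraj, hinterior]
  exact mem_image_of_mem _ (hT.2 t ht)

theorem Tcut_eq_of_minpoly_eq_general {d₁ d₂ : ℕ}
    (A : Matrix (Fin d₁) (Fin d₁) ℝ) (B : Matrix (Fin d₂) (Fin d₂) ℝ)
    (h : minpoly ℝ A = minpoly ℝ B) :
    ∀ x : Fin d₁ → ℝ, IsGeneric A x → ∀ y : Fin d₂ → ℝ, IsGeneric B y →
      Tcut A x = Tcut B y := by
  intro x hx y hy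
  have hker : LinearMap.ker (krylovMap A x) = LinearMap.ker (krylovMap B y) := by
    rw [ker_krylovMap_of_isGeneric hx, ker_krylovMap_of_isGeneric hy, h]
  obtain ⟨Φ, hΦ⟩ := (krylovMap A x).exists_comp_eq_of_ker_le _ hker.le
  obtain ⟨Ψ, hΨ⟩ := (krylovMap B y).exists_comp_eq_of_ker_le _ hker.ge
  have hcut : {T | IsCutTailPoint A x T} = {T | IsCutTailPoint B y T} :=
    Set.ext fun _ => ⟨.of_comp_krylovMap Φ Ψ hΦ hΨ, .of_comp_krylovMap Ψ Φ hΨ hΦ⟩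
  rw [Tcut, Tcut, hcut]

/-- The critical value `T_cut` of a Hurwitz matrix depends only on its minimal polynomial:
if Hurwitz matrices `A` and `B` (possibly of different sizes) have the same minimal polynomial,
then `T_cut(A) = T_cut(B)`, i.e. the (common) value of `T_cut` at generic points of `A` equals
the one at generic points of `B`. -/
theorem Tcut_eq_of_minpoly_eq {d₁ d₂ : ℕ}
    (A : Matrix (Fin d₁) (Fin d₁) ℝ) (B : Matrix (Fin d₂) (Fin d₂) ℝ)
    (hA : IsHurwitz A) (hB : IsHurwitz B)
    (h : minpoly ℝ A = minpoly ℝ B) :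
    ∀ x : Fin d₁ → ℝ, IsGeneric A x → ∀ y : Fin d₂ → ℝ, IsGeneric B y →
      Tcut A x = Tcut B y :=
  Tcut_eq_of_minpoly_eq_general A B h
end
end
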